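/- arXiv:1904.06328 — 7 statements merged into one kernel-verified Lean document; each statement's English description precedes it below -/
import Mathlib

section
/- Let c and t be positive integers with t ≤ c, and let G be a subset of {1,…,c} with |G| ≥ c/10. Let X₁,…,X_t be independent random variables (on some probability space) with values in {0,1,…,c}, where each X_i takes the value 0 with probability 63/64 and each value k ∈ {1,…,c} with probability 1/(64c). Let F denote the number of channels k ∈ G such that exactly one index i ∈ {1,…,t} satisfies X_i = k. Then P(F ≥ t/2000) ≥ 10⁻⁷. -/
open MeasureTheory ProbabilityTheory


lemma card_one_iff {α : Type*} [Fintype α] [DecidableEq α] (P : α → Prop) [DecidablePred P] :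
    (Finset.univ.filter P).card = 1 ↔ ∃ a, P a ∧ ∀ b, b ≠ a → ¬ P b := by
  rw [Finset.card_eq_one]
  constructor
  · rintro ⟨a, ha⟩
    have h := Finset.ext_iff.mp ha
    simp only [Finset.mem_filter, Finset.mem_univ, true_and, Finset.mem_singleton] at h
    exact ⟨a, (h a).mpr rfl, fun b hb hPb => hb ((h b).mp hPb)⟩
  · rintro ⟨a, hPa, ha⟩
    refine ⟨a, ?_⟩
    ext b
    simp only [Finset.mem_filter, Finset.mem_univ, true_and, Finset.mem_singleton]
    constructor
    · intro h; by_contra hb; exact ha b hb h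
    · rintro rfl; exact hPa

set_option maxHeartbeats 2000000 in
theorem stmt_0 (c t : ℕ) (hc : 0 < c) (ht : 0 < t) (htc : t ≤ c)
    (G : Finset ℕ) (hG : G ⊆ Finset.Icc 1 c) (hGcard : (c : ℝ) / 10 ≤ (G.card : ℝ))
    {Ω : Type*} [MeasureSpace Ω] [IsProbabilityMeasure (ℙ : Measure Ω)]
    (X : Fin t → Ω → ℕ) (hmeas : ∀ i, Measurable (X i))
    (hindep : iIndepFun X ℙ)
    (h0 : ∀ i, ℙ {ω | X i ω = 0} = 63 / 64)
    (hk : ∀ i, ∀ k ∈ Finset.Icc 1 c, ℙ {ω | X i ω = k} = 1 / (64 * (c : ENNReal))) :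
    (1 : ENNReal) / 10 ^ 7 ≤
      ℙ {ω | (t : ℝ) / 2000 ≤
        ((G.filter (fun k =>
          (Finset.univ.filter (fun i : Fin t => X i ω = k)).card = 1)).card : ℝ)} := by
  classical
  set x : ℝ := 1 / (64 * c) with hxdef
  have hcR : (1:ℝ) ≤ (c:ℝ) := by exact_mod_cast hc
  have hx_pos : 0 < x := by positivity
  have hx64 : x ≤ 1 / 64 := by
    rw [hxdef]
    rw [div_le_div_iff₀ (by positivity) (by norm_num)]
    nlinarith
  have htx : (t:ℝ) * x ≤ 1 / 64 := by
    have htcR : (t:ℝ) ≤ c := by exact_mod_cast htc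
    rw [hxdef]
    rw [mul_one_div, div_le_div_iff₀ (by positivity) (by norm_num)]
    nlinarith
  -- marginals
  have hXk : ∀ (i : Fin t), ∀ k ∈ Finset.Icc 1 c, ℙ (X i ⁻¹' {k}) = ENNReal.ofReal x := by
    intro i k hkmem
    have h := hk i k hkmem
    have hset : X i ⁻¹' {k} = {ω | X i ω = k} := rfl
    rw [hset, h, hxdef]
    rw [ENNReal.ofReal_div_of_pos (by positivity), ENNReal.ofReal_one, ENNReal.ofReal_mul (by norm_num)]
    norm_num
  have hXk' : ∀ (i : Fin t), ∀ k ∈ Finset.Icc 1 c,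
      ℙ (X i ⁻¹' ({k}ᶜ)) = ENNReal.ofReal (1 - x) := by
    intro i k hkmem
    rw [Set.preimage_compl, measure_compl ((hmeas i) (measurableSet_singleton k)) (measure_ne_top _ _),
      hXk i k hkmem, measure_univ, ENNReal.ofReal_sub _ hx_pos.le, ENNReal.ofReal_one]
  have hXkl : ∀ (i : Fin t), ∀ k ∈ Finset.Icc 1 c, ∀ l ∈ Finset.Icc 1 c, k ≠ l →
      ℙ (X i ⁻¹' (({k, l} : Set ℕ)ᶜ)) = ENNReal.ofReal (1 - 2 * x) := by
    intro i k hkmem l hlmem hkl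
    have hm : MeasurableSet ({k, l} : Set ℕ) :=
      (measurableSet_singleton k).union (measurableSet_singleton l)
    have hpair : ℙ (X i ⁻¹' ({k, l} : Set ℕ)) = ENNReal.ofReal (2 * x) := by
      have : ({k, l} : Set ℕ) = {k} ∪ {l} := rfl
      rw [this, Set.preimage_union,
        measure_union (by
          apply Set.disjoint_left.mpr
          intro ω h1 h2
          simp only [Set.mem_preimage, Set.mem_singleton_iff] at h1 h2
          exact hkl (h1.symm.trans h2)
          ) ((hmeas i) (measurableSet_singleton l)),
        hXk i k hkmem, hXk i l hlmem, ← ENNReal.ofReal_add hx_pos.le hx_pos.le]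
      ring_nf
    rw [Set.preimage_compl, measure_compl ((hmeas i) hm) (measure_ne_top _ _), measure_univ,
      hpair, ENNReal.ofReal_sub _ (by positivity), ENNReal.ofReal_one]
  -- product formula
  have hprod : ∀ (S : Fin t → Set ℕ), (∀ j, MeasurableSet (S j)) →
      ℙ (⋂ j, X j ⁻¹' S j) = ∏ j, ℙ (X j ⁻¹' S j) :=
    fun S hS => hindep.meas_iInter (fun j => ⟨S j, hS j, rfl⟩)
  -- single-hit events
  set B : Fin t → ℕ → Set Ω :=
    fun i k => ⋂ j, X j ⁻¹' (if j = i then ({k} : Set ℕ) else ({k} : Set ℕ)ᶜ) with hBdef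
  have hBmeasSet : ∀ (i : Fin t) (k : ℕ), ∀ j : Fin t,
      MeasurableSet (if j = i then ({k} : Set ℕ) else ({k} : Set ℕ)ᶜ) := by
    intro i k j
    split
    · exact measurableSet_singleton k
    · exact (measurableSet_singleton k).compl
  have hBmeas : ∀ (i : Fin t) (k : ℕ), MeasurableSet (B i k) := by
    intro i k
    exact MeasurableSet.iInter (fun j => (hmeas j) (hBmeasSet i k j))
  have hBval : ∀ (i : Fin t), ∀ k ∈ Finset.Icc 1 c,
      ℙ (B i k) = ENNReal.ofReal (x * (1 - x) ^ (t - 1)) := by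
    intro i k hkmem
    rw [hBdef]
    rw [hprod _ (hBmeasSet i k)]
    rw [← Finset.mul_prod_erase Finset.univ _ (Finset.mem_univ i)]
    rw [if_pos rfl, hXk i k hkmem]
    have hrest : ∀ j ∈ Finset.univ.erase i,
        ℙ (X j ⁻¹' (if j = i then ({k} : Set ℕ) else ({k} : Set ℕ)ᶜ)) =
          ENNReal.ofReal (1 - x) := by
      intro j hj
      rw [if_neg (Finset.ne_of_mem_erase hj), hXk' j k hkmem]
    rw [Finset.prod_congr rfl hrest, Finset.prod_const, Finset.card_erase_of_mem (Finset.mem_univ i),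
      Finset.card_univ, Fintype.card_fin, ENNReal.ofReal_mul hx_pos.le, ENNReal.ofReal_pow (by nlinarith)]
  -- membership in B
  have hBmem : ∀ (i : Fin t) (k : ℕ) (ω : Ω),
      ω ∈ B i k ↔ (X i ω = k ∧ ∀ j, j ≠ i → X j ω ≠ k) := by
    intro i k ω
    rw [hBdef]
    simp only [Set.mem_iInter, Set.mem_preimage]
    constructor
    · intro h
      refine ⟨?_, ?_⟩
      · have := h i
        rwa [if_pos rfl, Set.mem_singleton_iff] at this
      · intro j hj
        have := h j
        rwa [if_neg hj, Set.mem_compl_iff, Set.mem_singleton_iff] at this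
    · rintro ⟨h1, h2⟩ j
      by_cases hji : j = i
      · subst hji
        rw [if_pos rfl, Set.mem_singleton_iff]
        exact h1
      · rw [if_neg hji, Set.mem_compl_iff, Set.mem_singleton_iff]
        exact h2 j hji
  -- the "good channel" events
  set A : ℕ → Set Ω :=
    fun k => {ω | (Finset.univ.filter (fun i : Fin t => X i ω = k)).card = 1} with hAdef
  have hAeq : ∀ k, A k = ⋃ i, B i k := by
    intro k
    ext ω
    rw [hAdef]
    simp only [Set.mem_setOf_eq, Set.mem_iUnion]
    rw [card_one_iff]
    constructor
    · rintro ⟨a, h1, h2⟩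
      exact ⟨a, (hBmem a k ω).mpr ⟨h1, h2⟩⟩
    · rintro ⟨a, hB⟩
      obtain ⟨h1, h2⟩ := (hBmem a k ω).mp hB
      exact ⟨a, h1, h2⟩
  have hAmeas : ∀ k, MeasurableSet (A k) := by
    intro k
    rw [hAeq k]
    exact MeasurableSet.iUnion (fun i => hBmeas i k)
  have hAmem : ∀ (k : ℕ) (ω : Ω), ω ∈ A k ↔
      (Finset.univ.filter (fun i : Fin t => X i ω = k)).card = 1 := fun k ω => Iff.rfl
  have hBdisj : ∀ k, Pairwise (Function.onFun Disjoint (fun i => B i k)) := by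
    intro k i i' hii'
    apply Set.disjoint_left.mpr
    intro ω h1 h2
    obtain ⟨ha1, ha2⟩ := (hBmem i k ω).mp h1
    obtain ⟨hb1, hb2⟩ := (hBmem i' k ω).mp h2
    exact hb2 i hii' ha1
  have hAval : ∀ k ∈ Finset.Icc 1 c,
      ℙ (A k) = ENNReal.ofReal ((t : ℝ) * (x * (1 - x) ^ (t - 1))) := by
    intro k hkmem
    rw [hAeq k, measure_iUnion (hBdisj k) (fun i => hBmeas i k)]
    rw [tsum_fintype]
    have : ∀ i : Fin t, ℙ (B i k) = ENNReal.ofReal (x * (1 - x) ^ (t - 1)) :=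
      fun i => hBval i k hkmem
    rw [Finset.sum_congr rfl (fun i _ => this i), Finset.sum_const, Finset.card_univ,
      Fintype.card_fin, nsmul_eq_mul, ← ENNReal.ofReal_natCast t,
      ← ENNReal.ofReal_mul (by positivity)]
  -- pair events
  set C : Fin t → Fin t → ℕ → ℕ → Set Ω := fun i j k l =>
    ⋂ m, X m ⁻¹' (if m = i then ({k} : Set ℕ) else if m = j then ({l} : Set ℕ)
      else ({k, l} : Set ℕ)ᶜ) with hCdef
  have hCmeasSet : ∀ (i j : Fin t) (k l : ℕ), ∀ m : Fin t,
      MeasurableSet (if m = i then ({k} : Set ℕ) else if m = j then ({l} : Set ℕ)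
        else ({k, l} : Set ℕ)ᶜ) := by
    intro i j k l m
    split
    · exact measurableSet_singleton k
    split
    · exact measurableSet_singleton l
    · exact ((measurableSet_singleton k).union (measurableSet_singleton l)).compl
  have hCmeas : ∀ (i j : Fin t) (k l : ℕ), MeasurableSet (C i j k l) :=
    fun i j k l => MeasurableSet.iInter (fun m => (hmeas m) (hCmeasSet i j k l m))
  have hCmem : ∀ (i j : Fin t), i ≠ j → ∀ (k l : ℕ) (ω : Ω),
      (ω ∈ C i j k l ↔ (X i ω = k ∧ X j ω = l ∧
        ∀ m, m ≠ i → m ≠ j → (X m ω ≠ k ∧ X m ω ≠ l))) := by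
    intro i j hij k l ω
    rw [hCdef]
    simp only [Set.mem_iInter, Set.mem_preimage]
    constructor
    · intro h
      have hi := h i
      rw [if_pos rfl, Set.mem_singleton_iff] at hi
      have hj := h j
      rw [if_neg (Ne.symm hij), if_pos rfl, Set.mem_singleton_iff] at hj
      refine ⟨hi, hj, ?_⟩
      intro m hmi hmj
      have hm := h m
      rw [if_neg hmi, if_neg hmj, Set.mem_compl_iff, Set.mem_insert_iff,
        Set.mem_singleton_iff] at hm
      push_neg at hm
      exact hm
    · rintro ⟨h1, h2, h3⟩ m
      by_cases hmi : m = i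
      · subst hmi; rw [if_pos rfl, Set.mem_singleton_iff]; exact h1
      by_cases hmj : m = j
      · subst hmj; rw [if_neg hmi, if_pos rfl, Set.mem_singleton_iff]; exact h2
      · rw [if_neg hmi, if_neg hmj, Set.mem_compl_iff, Set.mem_insert_iff, Set.mem_singleton_iff]
        push_neg
        exact h3 m hmi hmj
  have hCval : ∀ (i j : Fin t), i ≠ j → ∀ k ∈ Finset.Icc 1 c, ∀ l ∈ Finset.Icc 1 c, k ≠ l →
      ℙ (C i j k l) = ENNReal.ofReal (x * x * (1 - 2 * x) ^ (t - 2)) := by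
    intro i j hij k hkmem l hlmem hkl
    rw [hCdef, hprod _ (hCmeasSet i j k l)]
    rw [← Finset.mul_prod_erase Finset.univ _ (Finset.mem_univ i)]
    have hjmem : j ∈ Finset.univ.erase i := Finset.mem_erase.mpr ⟨(Ne.symm hij), Finset.mem_univ j⟩
    rw [← Finset.mul_prod_erase _ _ hjmem]
    have f1 : ℙ (X i ⁻¹' (if i = i then ({k} : Set ℕ) else if i = j then ({l} : Set ℕ)
        else ({k, l} : Set ℕ)ᶜ)) = ENNReal.ofReal x := by
      rw [if_pos rfl]; exact hXk i k hkmem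
    have f2 : ℙ (X j ⁻¹' (if j = i then ({k} : Set ℕ) else if j = j then ({l} : Set ℕ)
        else ({k, l} : Set ℕ)ᶜ)) = ENNReal.ofReal x := by
      rw [if_neg (Ne.symm hij), if_pos rfl]; exact hXk j l hlmem
    rw [f1, f2]
    have hrest : ∀ m ∈ (Finset.univ.erase i).erase j,
        ℙ (X m ⁻¹' (if m = i then ({k} : Set ℕ) else if m = j then ({l} : Set ℕ)
          else ({k, l} : Set ℕ)ᶜ)) = ENNReal.ofReal (1 - 2 * x) := by
      intro m hm
      have hmj : m ≠ j := Finset.ne_of_mem_erase hm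
      have hmi : m ≠ i := Finset.ne_of_mem_erase (Finset.mem_of_mem_erase hm)
      rw [if_neg hmi, if_neg hmj]
      exact hXkl m k hkmem l hlmem hkl
    rw [Finset.prod_congr rfl hrest, Finset.prod_const,
      Finset.card_erase_of_mem hjmem, Finset.card_erase_of_mem (Finset.mem_univ i),
      Finset.card_univ, Fintype.card_fin]
    rw [← ENNReal.ofReal_pow (by nlinarith), ← ENNReal.ofReal_mul hx_pos.le,
      ← ENNReal.ofReal_mul hx_pos.le]
    congr 1
    rw [Nat.sub_sub]
    ring
  -- A k ∩ A l as disjoint union of C's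
  have hAAeq : ∀ k l : ℕ, k ≠ l →
      A k ∩ A l = ⋃ p ∈ (Finset.univ : Finset (Fin t)).offDiag, C p.1 p.2 k l := by
    intro k l hkl
    ext ω
    rw [Set.mem_inter_iff, Set.mem_iUnion₂]
    rw [hAeq k, hAeq l]
    simp only [Set.mem_iUnion]
    constructor
    · rintro ⟨⟨i, hBi⟩, ⟨j, hBj⟩⟩
      obtain ⟨hik, hik'⟩ := (hBmem i k ω).mp hBi
      obtain ⟨hjl, hjl'⟩ := (hBmem j l ω).mp hBj
      have hij : i ≠ j := by
        intro h
        subst h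
        exact hkl (hik.symm.trans hjl)
      refine ⟨(i, j), Finset.mem_offDiag.mpr ⟨Finset.mem_univ _, Finset.mem_univ _, hij⟩, ?_⟩
      rw [hCmem i j hij]
      exact ⟨hik, hjl, fun m hmi hmj => ⟨hik' m hmi, hjl' m hmj⟩⟩
    · rintro ⟨p, hp, hC⟩
      obtain ⟨i, j⟩ := p
      have hij : i ≠ j := (Finset.mem_offDiag.mp hp).2.2
      obtain ⟨h1, h2, h3⟩ := (hCmem i j hij k l ω).mp hC
      constructor
      · refine ⟨i, (hBmem i k ω).mpr ⟨h1, ?_⟩⟩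
        intro m hmi
        by_cases hmj : m = j
        · subst hmj
          rw [h2]
          exact Ne.symm hkl
        · exact (h3 m hmi hmj).1
      · refine ⟨j, (hBmem j l ω).mpr ⟨h2, ?_⟩⟩
        intro m hmj
        by_cases hmi : m = i
        · subst hmi
          rw [h1]
          exact hkl
        · exact (h3 m hmi hmj).2
  have hAAval : ∀ k ∈ Finset.Icc 1 c, ∀ l ∈ Finset.Icc 1 c, k ≠ l →
      ℙ (A k ∩ A l) = ENNReal.ofReal (((t:ℝ) * t - t) * (x * x * (1 - 2 * x) ^ (t - 2))) := by
    intro k hkmem l hlmem hkl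
    rw [hAAeq k l hkl]
    rw [measure_biUnion_finset ?hdisj (fun p _ => hCmeas p.1 p.2 k l)]
    case hdisj =>
      intro p hp q hq hpq
      have hp' : p.1 ≠ p.2 := (Finset.mem_offDiag.mp hp).2.2
      have hq' : q.1 ≠ q.2 := (Finset.mem_offDiag.mp hq).2.2
      apply Set.disjoint_left.mpr
      intro ω h1 h2
      obtain ⟨a1, b1, o1⟩ := (hCmem p.1 p.2 hp' k l ω).mp h1
      obtain ⟨a2, b2, o2⟩ := (hCmem q.1 q.2 hq' k l ω).mp h2
      apply hpq
      have hfst : p.1 = q.1 := by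
        by_contra hne
        by_cases h' : p.1 = q.2
        · exact hkl ((h' ▸ a1).symm.trans b2).symm.symm
        · exact (o2 p.1 hne h').1 a1
      have hsnd : p.2 = q.2 := by
        by_contra hne
        by_cases h' : p.2 = q.1
        · exact hkl ((h' ▸ b1).symm.trans a2).symm
        · exact (o2 p.2 h' hne).2 b1
      exact Prod.ext hfst hsnd
    have hterm : ∀ p ∈ (Finset.univ : Finset (Fin t)).offDiag,
        ℙ (C p.1 p.2 k l) = ENNReal.ofReal (x * x * (1 - 2 * x) ^ (t - 2)) := by
      intro p hp
      exact hCval p.1 p.2 (Finset.mem_offDiag.mp hp).2.2 k hkmem l hlmem hkl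
    rw [Finset.sum_congr rfl hterm, Finset.sum_const, Finset.offDiag_card,
      Finset.card_univ, Fintype.card_fin, nsmul_eq_mul]
    rw [← ENNReal.ofReal_natCast, ← ENNReal.ofReal_mul (by positivity)]
    congr 1
    push_cast [Nat.cast_sub (Nat.le_mul_of_pos_left t ht)]
    ring_nf
  -- the counting function as a sum of indicators
  set f : Ω → ℝ := fun ω => ∑ k ∈ G, Set.indicator (A k) (fun _ => (1:ℝ)) ω with hfdef
  have hf_eq : ∀ ω, f ω = ((G.filter (fun k =>
      (Finset.univ.filter (fun i : Fin t => X i ω = k)).card = 1)).card : ℝ) := by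
    intro ω
    rw [hfdef]
    rw [Finset.card_filter]
    push_cast
    apply Finset.sum_congr rfl
    intro k hkG
    rw [Set.indicator_apply]
    have hiff := hAmem k ω
    by_cases h : (Finset.univ.filter (fun i : Fin t => X i ω = k)).card = 1
    · rw [if_pos (hiff.mpr h), if_pos h]
    · rw [if_neg (fun hh => h (hiff.mp hh)), if_neg h]
  clear_value A B C f
  have hf_meas : Measurable f := by
    rw [hfdef]
    exact Finset.measurable_sum G (fun k _ =>
      (measurable_const.indicator (hAmeas k)))
  have hf_mem2 : MemLp f 2 ℙ := by
    rw [hfdef]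
    have h := memLp_finset_sum' G (f := fun k => (A k).indicator (fun _ => (1:ℝ)))
      (fun k _ => memLp_indicator_const 2 (hAmeas k) (1:ℝ) (Or.inr (measure_ne_top ℙ _)))
    convert h using 1
    ext ω
    simp [Finset.sum_apply]
  have h1x : (0:ℝ) ≤ 1 - x := by nlinarith
  have h12x : (0:ℝ) ≤ 1 - 2 * x := by nlinarith
  set pr : ℝ := (t:ℝ) * (x * (1 - x) ^ (t - 1)) with hprdef
  set qr : ℝ := ((t:ℝ) * t - t) * (x * x * (1 - 2 * x) ^ (t - 2)) with hqrdef
  set g : ℝ := (G.card : ℝ) with hgdef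
  have hpr_nonneg : 0 ≤ pr := by
    rw [hprdef]; positivity
  have hqr_nonneg : 0 ≤ qr := by
    rw [hqrdef]
    apply mul_nonneg
    · have : (1:ℝ) ≤ (t:ℝ) := by exact_mod_cast ht
      nlinarith
    · positivity
  have hprG : ∀ k ∈ G, (ℙ (A k)).toReal = pr := by
    intro k hkG
    rw [hAval k (hG hkG), ENNReal.toReal_ofReal hpr_nonneg]
  have hqrG : ∀ k ∈ G, ∀ l ∈ G, k ≠ l → (ℙ (A k ∩ A l)).toReal = qr := by
    intro k hkG l hlG hkl
    rw [hAAval k (hG hkG) l (hG hlG) hkl, ENNReal.toReal_ofReal hqr_nonneg]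
  have hInd : ∀ (s : Set Ω), MeasurableSet s →
      Integrable (Set.indicator s (fun _ => (1:ℝ))) ℙ :=
    fun s hs => (integrable_const (1:ℝ)).indicator hs
  have hExp : ∫ ω, f ω ∂ℙ = g * pr := by
    rw [hfdef]
    rw [integral_finset_sum G (fun k _ => hInd (A k) (hAmeas k))]
    have : ∀ k ∈ G, ∫ ω, Set.indicator (A k) (fun _ => (1:ℝ)) ω ∂ℙ = pr := by
      intro k hkG
      rw [integral_indicator_const (1:ℝ) (hAmeas k), smul_eq_mul, mul_one, measureReal_def, hprG k hkG]
    rw [Finset.sum_congr rfl this, Finset.sum_const, nsmul_eq_mul, hgdef]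
  have hSq : ∫ ω, f ω ^ 2 ∂ℙ = g * pr + g * (g - 1) * qr := by
    have hff : (fun ω => f ω ^ 2) = fun ω =>
        ∑ k ∈ G, ∑ l ∈ G, Set.indicator (A k ∩ A l) (fun _ => (1:ℝ)) ω := by
      funext ω
      rw [hfdef, sq, Finset.sum_mul_sum]
      apply Finset.sum_congr rfl; intro k _
      apply Finset.sum_congr rfl; intro l _
      simp only [Set.indicator_apply, Set.mem_inter_iff]
      by_cases h1 : ω ∈ A k <;> by_cases h2 : ω ∈ A l <;> simp [h1, h2]
    rw [hff]
    rw [integral_finset_sum G (fun k _ => integrable_finset_sum G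
      (fun l _ => hInd _ ((hAmeas k).inter (hAmeas l))))]
    have hinner : ∀ k ∈ G, (∫ ω, ∑ l ∈ G, Set.indicator (A k ∩ A l) (fun _ => (1:ℝ)) ω ∂ℙ)
        = pr + (g - 1) * qr := by
      intro k hkG
      rw [integral_finset_sum G (fun l _ => hInd _ ((hAmeas k).inter (hAmeas l)))]
      have hterm : ∀ l ∈ G, ∫ ω, Set.indicator (A k ∩ A l) (fun _ => (1:ℝ)) ω ∂ℙ
          = (ℙ (A k ∩ A l)).toReal := by
        intro l _
        rw [integral_indicator_const (1:ℝ) ((hAmeas k).inter (hAmeas l)), smul_eq_mul, mul_one, measureReal_def]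
      rw [Finset.sum_congr rfl hterm]
      rw [← Finset.add_sum_erase G _ hkG]
      rw [Set.inter_self, hprG k hkG]
      congr 1
      have herase : ∀ l ∈ G.erase k, (ℙ (A k ∩ A l)).toReal = qr := by
        intro l hl
        exact hqrG k hkG l (Finset.mem_of_mem_erase hl) (Ne.symm (Finset.ne_of_mem_erase hl))
      rw [Finset.sum_congr rfl herase, Finset.sum_const, nsmul_eq_mul,
        Finset.card_erase_of_mem hkG, Nat.cast_sub (Finset.card_pos.mpr ⟨k, hkG⟩), Nat.cast_one]
    rw [Finset.sum_congr rfl hinner, Finset.sum_const, nsmul_eq_mul, hgdef]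
    ring
  have hVar : variance f ℙ = g * pr + g * (g - 1) * qr - (g * pr) ^ 2 := by
    rw [variance_eq_sub hf_mem2]
    simp only [Pi.pow_apply]
    rw [hSq, hExp]
  -- Bernoulli lower bound
  have hbern : (63:ℝ)/64 ≤ (1 - x) ^ (t - 1) := by
    have h := one_add_mul_le_pow (a := -x) (by nlinarith) (t - 1)
    have hcast : ((t - 1 : ℕ) : ℝ) = (t:ℝ) - 1 := by
      rw [Nat.cast_sub ht, Nat.cast_one]
    rw [hcast] at h
    have h1 : (1:ℝ) + (-x) = 1 - x := by ring
    rw [h1] at h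
    linarith [h, htx, hx_pos.le]
  have hcx : (c:ℝ) * x = 1/64 := by
    rw [hxdef]
    field_simp
  have hgc : (c:ℝ)/10 ≤ g := hGcard
  have hE_lb : 63 * (t:ℝ) / 40960 ≤ g * pr := by
    have h1 : (t:ℝ) * x * (63/64) ≤ pr := by
      rw [hprdef]
      have h0 : (0:ℝ) ≤ (t:ℝ) * x := by positivity
      linarith [mul_le_mul_of_nonneg_left hbern h0]
    have htpos : (0:ℝ) < t := by exact_mod_cast ht
    have h2 : (c:ℝ)/10 * ((t:ℝ) * x * (63/64)) = 63 * (t:ℝ) / 40960 := by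
      linear_combination (63 * (t:ℝ) / 640) * hcx
    have h3 := mul_le_mul hgc h1 (by positivity) (by linarith [hgc, hcR])
    linarith [h3, h2]
  -- case split
  by_cases hts : t ≤ 2000
  · -- small t : exhibit one good channel via node 0
    set i0 : Fin t := ⟨0, ht⟩ with hi0
    have hsub : (⋃ k ∈ G, B i0 k) ⊆ {ω | (t : ℝ) / 2000 ≤
        ((G.filter (fun k =>
          (Finset.univ.filter (fun i : Fin t => X i ω = k)).card = 1)).card : ℝ)} := by
      intro ω hω
      obtain ⟨k, hkG, hB⟩ := Set.mem_iUnion₂.mp hω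
      have hA : ω ∈ A k := by
        rw [hAeq k]
        exact Set.mem_iUnion.mpr ⟨i0, hB⟩
      have hmemf : k ∈ G.filter (fun k =>
          (Finset.univ.filter (fun i : Fin t => X i ω = k)).card = 1) :=
        Finset.mem_filter.mpr ⟨hkG, (hAmem k ω).mp hA⟩
      have hcard1 : 1 ≤ (G.filter (fun k =>
          (Finset.univ.filter (fun i : Fin t => X i ω = k)).card = 1)).card :=
        Finset.card_pos.mpr ⟨k, hmemf⟩
      have : (1:ℝ) ≤ ((G.filter (fun k =>
          (Finset.univ.filter (fun i : Fin t => X i ω = k)).card = 1)).card : ℝ) := by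
        exact_mod_cast hcard1
      have ht2000 : (t:ℝ) / 2000 ≤ 1 := by
        rw [div_le_one (by norm_num)]
        exact_mod_cast hts
      exact Set.mem_setOf_eq ▸ le_trans ht2000 this
    refine le_trans ?_ (le_trans (measure_mono hsub) (le_refl _))
    have hBdisjk : ∀ k₁ ∈ G, ∀ k₂ ∈ G, k₁ ≠ k₂ → Disjoint (B i0 k₁) (B i0 k₂) := by
      intro k₁ _ k₂ _ hne
      apply Set.disjoint_left.mpr
      intro ω h1 h2
      exact hne (((hBmem i0 k₁ ω).mp h1).1.symm.trans ((hBmem i0 k₂ ω).mp h2).1)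
    rw [measure_biUnion_finset (fun k₁ h1 k₂ h2 hne => hBdisjk k₁ h1 k₂ h2 hne)
      (fun k _ => hBmeas i0 k)]
    have hterm : ∀ k ∈ G, ℙ (B i0 k) = ENNReal.ofReal (x * (1 - x) ^ (t - 1)) :=
      fun k hkG => hBval i0 k (hG hkG)
    rw [Finset.sum_congr rfl hterm, Finset.sum_const, nsmul_eq_mul,
      ← ENNReal.ofReal_natCast, ← ENNReal.ofReal_mul (by positivity)]
    have hlow : (1:ℝ)/10^7 ≤ (G.card : ℝ) * (x * (1 - x) ^ (t - 1)) := by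
      have h1 : (c:ℝ)/10 * (x * (63/64)) ≤ (G.card : ℝ) * (x * (1 - x) ^ (t - 1)) := by
        apply mul_le_mul hgc _ (by positivity) (by nlinarith)
        nlinarith [mul_le_mul_of_nonneg_left hbern hx_pos.le]
      have h2 : (c:ℝ)/10 * (x * (63/64)) = 63/40960 := by
        field_simp
        nlinarith [hcx]
      nlinarith
    calc (1:ENNReal)/10^7 = ENNReal.ofReal ((1:ℝ)/10^7) := by
          rw [ENNReal.ofReal_div_of_pos (by norm_num), ENNReal.ofReal_one,
            ENNReal.ofReal_pow (by norm_num)]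
          norm_num
      _ ≤ ENNReal.ofReal ((G.card : ℝ) * (x * (1 - x) ^ (t - 1))) :=
          ENNReal.ofReal_le_ofReal hlow
  · -- large t : Chebyshev
    push_neg at hts
    have ht2 : 2 ≤ t := by omega
    have htR : (2000:ℝ) ≤ (t:ℝ) := by exact_mod_cast hts.le
    -- qr ≤ pr ^ 2
    have hqr_le : qr ≤ pr ^ 2 := by
      have h2tx : 2 * (t:ℝ) * x ≤ 1/32 := by nlinarith
      have e1 : ((1 - x) ^ (t - 1)) ^ 2 = ((1 - x) ^ 2) ^ (t - 1) := by
        rw [← pow_mul, ← pow_mul, mul_comm]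
      have e2 : ((1 - x) ^ 2) ^ (t - 1) = ((1 - x) ^ 2) ^ (t - 2) * (1 - x) ^ 2 := by
        rw [← pow_succ]
        congr 1
        omega
      have h3 : (1 - 2*x) ^ (t - 2) ≤ ((1 - x) ^ 2) ^ (t - 2) := by
        apply pow_le_pow_left₀ h12x
        nlinarith
      have h4 : (t:ℝ) * t - t ≤ (t:ℝ) * t * (1 - x) ^ 2 := by
        have htpos : (0:ℝ) < t := by exact_mod_cast ht
        nlinarith [mul_le_mul_of_nonneg_left htx htpos.le, sq_nonneg ((t:ℝ)*x), htpos]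
      have hpow_nonneg : (0:ℝ) ≤ ((1 - x) ^ 2) ^ (t - 2) := by positivity
      rw [hqrdef, hprdef]
      calc ((t:ℝ) * t - t) * (x * x * (1 - 2 * x) ^ (t - 2))
          ≤ ((t:ℝ) * t - t) * (x * x * ((1 - x) ^ 2) ^ (t - 2)) := by
            apply mul_le_mul_of_nonneg_left _ (by nlinarith)
            apply mul_le_mul_of_nonneg_left h3 (by positivity)
        _ ≤ ((t:ℝ) * t * (1 - x) ^ 2) * (x * x * ((1 - x) ^ 2) ^ (t - 2)) := by
            apply mul_le_mul_of_nonneg_right h4 (by positivity)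
        _ = ((t:ℝ) * (x * (1 - x) ^ (t - 1))) ^ 2 := by
            rw [mul_pow, mul_pow, e1, e2]
            ring
    have hg_pos : (0:ℝ) < g := by nlinarith
    have hpr_pos : (0:ℝ) < pr := by
      rw [hprdef]
      have htpos : (0:ℝ) < t := by exact_mod_cast ht
      have : (0:ℝ) < 1 - x := by nlinarith
      positivity
    have hE_pos : (0:ℝ) < g * pr := by positivity
    have hVar_le : variance f ℙ ≤ g * pr := by
      rw [hVar]
      nlinarith [mul_nonneg hg_pos.le hqr_nonneg,
        mul_le_mul_of_nonneg_left hqr_le (by positivity : (0:ℝ) ≤ g * g)]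
    set T : ℝ := (t:ℝ)/2000 with hTdef
    set E : ℝ := g * pr with hEdef
    clear_value T E
    have hT_le : T ≤ (512/1575) * E := by
      rw [hTdef]
      linarith [hE_lb, hEdef]
    have hgap_pos : 0 < E - T := by
      have : (0:ℝ) < E := hE_pos
      linarith [hT_le]
    have hE3 : (3:ℝ) ≤ E := by
      have h1 : 63 * (t:ℝ)/40960 ≤ E := hE_lb
      linarith [htR]
    have hbound : variance f ℙ / (E - T)^2 ≤ 3/4 := by
      rw [div_le_iff₀ (by positivity)]
      have hgap_lb : (1063/1575) * E ≤ E - T := by linarith [hT_le]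
      have hVar_le' : variance f ℙ ≤ E := hVar_le
      have hsq : ((1063:ℝ)/1575 * E) * ((1063:ℝ)/1575 * E) ≤ (E - T) * (E - T) :=
        mul_le_mul hgap_lb hgap_lb (by nlinarith [hE3]) (by linarith [hgap_pos])
      nlinarith [hVar_le', hsq, hE3]
    have hcheb := meas_ge_le_variance_div_sq (μ := ℙ) hf_mem2 hgap_pos
    set S : Set Ω := {ω | T ≤
        ((G.filter (fun k =>
          (Finset.univ.filter (fun i : Fin t => X i ω = k)).card = 1)).card : ℝ)} with hSdef
    clear_value S
    have hcompl : Sᶜ ⊆ {ω | E - T ≤ |f ω - ∫ ω, f ω ∂ℙ|} := by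
      intro ω hω
      rw [hSdef] at hω
      simp only [Set.mem_compl_iff, Set.mem_setOf_eq, not_le] at hω
      rw [← hf_eq ω] at hω
      simp only [Set.mem_setOf_eq]
      rw [hExp]
      rw [abs_sub_comm, abs_of_nonneg (by linarith [hgap_pos] : (0:ℝ) ≤ E - f ω)]
      linarith [hgap_pos]
    have hScompl : ℙ Sᶜ ≤ ENNReal.ofReal (3/4) := by
      calc ℙ Sᶜ ≤ ℙ {ω | E - T ≤ |f ω - ∫ ω, f ω ∂ℙ|} := measure_mono hcompl
        _ ≤ ENNReal.ofReal (variance f ℙ / (E - T)^2) := hcheb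
        _ ≤ ENNReal.ofReal (3/4) := ENNReal.ofReal_le_ofReal hbound
    have h34 : ENNReal.ofReal ((3:ℝ)/4) = 3/4 := by
      rw [ENNReal.ofReal_div_of_pos (by norm_num), ENNReal.ofReal_ofNat, ENNReal.ofReal_ofNat]
    have hunion : (1:ENNReal) ≤ ℙ S + ℙ Sᶜ := by
      have h1 : ℙ (S ∪ Sᶜ) = 1 := by rw [Set.union_compl_self]; exact measure_univ
      calc (1:ENNReal) = ℙ (S ∪ Sᶜ) := h1.symm
        _ ≤ ℙ S + ℙ Sᶜ := measure_union_le S Sᶜ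
    have hPS : (1:ENNReal) - 3/4 ≤ ℙ S := by
      rw [tsub_le_iff_right]
      calc (1:ENNReal) ≤ ℙ S + ℙ Sᶜ := hunion
        _ ≤ ℙ S + 3/4 := by
            apply add_le_add_right
            rw [← h34]
            exact hScompl
    refine le_trans ?_ hPS
    have hq : (1:ENNReal) - 3/4 = 1/4 := by
      apply ENNReal.sub_eq_of_eq_add ((ENNReal.div_lt_top (by norm_num) (by norm_num)).ne)
      rw [ENNReal.div_add_div_same, show (1:ENNReal) + 3 = 4 from by norm_num]
      exact (ENNReal.div_self (by norm_num) (by norm_num)).symm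
    rw [hq]
    exact ENNReal.div_le_div (le_refl 1) (by norm_num)
end

section
/- For every integer n ≥ 2, one has 1 − (1 − 1/(32n))^{n−1} − (n−1)·(1/(32n))·(1 − 1/(32n))^{n−2} < 0.05. -/
theorem stmt_2 (n : ℕ) (hn : 2 ≤ n) :
    1 - (1 - 1 / (32 * (n : ℝ))) ^ (n - 1)
      - ((n : ℝ) - 1) * (1 / (32 * (n : ℝ))) * (1 - 1 / (32 * (n : ℝ))) ^ (n - 2)
      < 0.05 := by
  have hn' : (2:ℝ) ≤ n := by exact_mod_cast hn
  set p : ℝ := 1 / (32 * n) with hp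
  have hnpos : (0:ℝ) < n := by linarith
  have hppos : 0 < p := by positivity
  have hple : p ≤ 1 := by
    rw [hp, div_le_one (by positivity)]; linarith
  have hcast : ((n - 1 : ℕ) : ℝ) = (n:ℝ) - 1 := by
    have h1 : 1 ≤ n := by omega
    push_cast [h1]; ring
  have hb : 1 - ((n:ℝ) - 1) * p ≤ (1 - p) ^ (n - 1) := by
    have h := one_add_mul_le_pow (a := -p) (by linarith) (n - 1)
    rw [hcast, ← sub_eq_add_neg] at h
    linarith [h]
  have hnn : 0 ≤ ((n:ℝ) - 1) * p * (1 - p) ^ (n - 2) := by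
    apply mul_nonneg (mul_nonneg (by linarith) hppos.le)
    exact pow_nonneg (by linarith) _
  have hnp : ((n:ℝ) - 1) * p < 1 / 32 := by
    have : (n:ℝ) * p = 1 / 32 := by
      rw [hp, mul_one_div, div_eq_div_iff (by positivity) (by norm_num)]; ring
    nlinarith
  nlinarith
end

section
/- Let n ≥ 2 be an integer, let t be an integer with 1 ≤ t ≤ n/2, let p be a real number with 0 < p ≤ 1/2, and set c = n/2 (as a real number). Then (1/10) · p · (1 − p/c)^{t−1} · (1 − (1 − p/c)^{n−t}) ≥ p²/(20·e^{2p}). -/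
/-!
Write `x = p / c ≤ p ≤ 1/2`. On `[0, 1/2]` one has `exp (-2x) ≤ 1 - x ≤ exp (-x)`, so
`(1 - x)^(t-1) ≥ exp (-2 (t-1) x) ≥ exp (-2p)` because `t - 1 ≤ c`, and
`(1 - x)^(n-t) ≤ exp (-(n-t) x) ≤ exp (-p) ≤ 1 - p/2` because `n - t ≥ c`, the last step
being the first inequality at `p/2`.
-/

open Real

lemma exp_neg_two_mul_le_one_sub {x : ℝ} (hx0 : 0 ≤ x) (hx : x ≤ 1 / 2) :
    exp (-(2 * x)) ≤ 1 - x := by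
  rw [exp_neg, inv_le_iff_one_le_mul₀ (exp_pos _)]
  calc (1 : ℝ) ≤ (1 - x) * (2 * x + 1) := by nlinarith
    _ ≤ (1 - x) * exp (2 * x) := by
      gcongr
      · linarith
      · exact add_one_le_exp _

lemma exp_neg_two_mul_le_one_sub_pow {x : ℝ} (hx0 : 0 ≤ x) (hx : x ≤ 1 / 2) (k : ℕ) :
    exp (-(2 * (k * x))) ≤ (1 - x) ^ k :=
  calc exp (-(2 * (k * x))) = exp (-(2 * x)) ^ k := by rw [← exp_nat_mul]; ring_nf
    _ ≤ (1 - x) ^ k := pow_le_pow_left₀ (exp_pos _).le (exp_neg_two_mul_le_one_sub hx0 hx) k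

lemma one_sub_pow_le_exp_neg_mul {x : ℝ} (hx : x ≤ 1) (k : ℕ) :
    (1 - x) ^ k ≤ exp (-(k * x)) :=
  calc (1 - x) ^ k ≤ exp (-x) ^ k := pow_le_pow_left₀ (by linarith) (one_sub_le_exp_neg x) k
    _ = exp (-(k * x)) := by rw [← exp_nat_mul]; ring_nf

theorem stmt_4 (n t : ℕ) (hn : 2 ≤ n) (ht1 : 1 ≤ t) (ht2 : (t : ℝ) ≤ (n : ℝ) / 2)
    (p : ℝ) (hp0 : 0 < p) (hp1 : p ≤ 1 / 2) (c : ℝ) (hc : c = (n : ℝ) / 2) :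
    p ^ 2 / (20 * Real.exp (2 * p)) ≤
      (1 / 10) * p * (1 - p / c) ^ (t - 1) * (1 - (1 - p / c) ^ (n - t)) := by
  have hc1 : 1 ≤ c := by rw [hc, le_div_iff₀ two_pos]; exact_mod_cast hn
  set x := p / c
  have hcx : c * x = p := mul_div_cancel₀ p (by positivity)
  have hx0 : 0 ≤ x := by positivity
  have hxp : x ≤ p := div_le_self hp0.le hc1
  have hA : exp (-(2 * p)) ≤ (1 - x) ^ (t - 1) := by
    refine le_trans (exp_le_exp.mpr ?_) (exp_neg_two_mul_le_one_sub_pow hx0 (hxp.trans hp1) _)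
    have htc : ((t - 1 : ℕ) : ℝ) ≤ c := by rw [Nat.cast_sub ht1]; linarith
    nlinarith
  have hB : p / 2 ≤ 1 - (1 - x) ^ (n - t) := by
    have htn : t ≤ n := by exact_mod_cast ht2.trans (by linarith : (n : ℝ) / 2 ≤ n)
    have hcnt : c ≤ ((n - t : ℕ) : ℝ) := by rw [Nat.cast_sub htn]; linarith
    have hpow : (1 - x) ^ (n - t) ≤ 1 - p / 2 :=
      calc (1 - x) ^ (n - t) ≤ exp (-((n - t : ℕ) * x)) := one_sub_pow_le_exp_neg_mul (by linarith) _
        _ ≤ exp (-(2 * (p / 2))) := exp_le_exp.mpr (by nlinarith)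
        _ ≤ 1 - p / 2 := exp_neg_two_mul_le_one_sub (by positivity) (by linarith)
    linarith
  calc p ^ 2 / (20 * exp (2 * p)) = 1 / 10 * p * exp (-(2 * p)) * (p / 2) := by
        rw [exp_neg]; field_simp; ring
    _ ≤ 1 / 10 * p * (1 - x) ^ (t - 1) * (1 - (1 - x) ^ (n - t)) := by
        have hx1 : 0 ≤ 1 - x := by linarith
        gcongr
end

section
/- Let n ≥ 2 be an integer, let t be an integer with n/2 ≤ t ≤ n, let p be a real number with 0 < p ≤ 1/2, and set c = n/2 (as a real number). Then (1/10) · p · t · (p/c) · (1 − p/c)^{t−1} ≥ (p²/10) · e^{−4p}. -/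
lemma exp_neg_two_le_aux (x : ℝ) (h0 : 0 ≤ x) (h1 : x ≤ 1/2) :
    Real.exp (-(2*x)) ≤ 1 - x := by
  have hE := Real.add_one_le_exp (2*x)
  have hmul : Real.exp (-(2*x)) * Real.exp (2*x) = 1 := by
    rw [← Real.exp_add]; simp
  have hpos := Real.exp_pos (-(2*x))
  nlinarith [Real.exp_pos (2*x)]

theorem stmt_5 (n t : ℕ) (hn : 2 ≤ n) (ht1 : (n : ℝ) / 2 ≤ (t : ℝ)) (ht2 : t ≤ n)
    (p : ℝ) (hp0 : 0 < p) (hp1 : p ≤ 1 / 2) (c : ℝ) (hc : c = (n : ℝ) / 2) :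
    (p ^ 2 / 10) * Real.exp (-(4 * p)) ≤
      (1 / 10) * p * (t : ℝ) * (p / c) * (1 - p / c) ^ (t - 1) := by
  have hn2 : (2:ℝ) ≤ (n:ℝ) := by exact_mod_cast hn
  have hc1 : (1:ℝ) ≤ c := by rw [hc]; linarith
  have hcpos : (0:ℝ) < c := by linarith
  have hx0 : 0 ≤ p / c := by positivity
  have hx1 : p / c ≤ 1/2 := le_trans (div_le_self hp0.le hc1) hp1
  have key := exp_neg_two_le_aux (p/c) hx0 hx1
  have htn : ((t - 1 : ℕ) : ℝ) ≤ (n : ℝ) := by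
    have : (t - 1 : ℕ) ≤ n := le_trans (Nat.sub_le t 1) ht2
    exact_mod_cast this
  have hpow1 : (Real.exp (-(2*(p/c)))) ^ (t-1) ≤ (1 - p/c) ^ (t-1) :=
    pow_le_pow_left₀ (Real.exp_pos _).le key _
  have hexp_eq : (Real.exp (-(2*(p/c)))) ^ (t-1)
      = Real.exp (((t-1:ℕ):ℝ) * (-(2*(p/c)))) := by
    rw [Real.exp_nat_mul]
  have harg : -(4*p) ≤ ((t-1:ℕ):ℝ) * (-(2*(p/c))) := by
    have hnc : (n:ℝ) = 2*c := by rw [hc]; ring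
    rw [hnc] at htn
    have h2 : ((t-1:ℕ):ℝ) * (2*(p/c)) ≤ 2*c * (2*(p/c)) := by
      apply mul_le_mul_of_nonneg_right htn; positivity
    have h3 : 2*c * (2*(p/c)) = 4*p := by field_simp; ring
    nlinarith
  have hpow : Real.exp (-(4*p)) ≤ (1 - p/c) ^ (t-1) := by
    calc Real.exp (-(4*p)) ≤ Real.exp (((t-1:ℕ):ℝ) * (-(2*(p/c)))) :=
          Real.exp_le_exp.mpr harg
      _ = (Real.exp (-(2*(p/c)))) ^ (t-1) := hexp_eq.symm
      _ ≤ (1 - p/c) ^ (t-1) := hpow1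
  have htc : c ≤ (t:ℝ) := by rw [hc]; exact ht1
  have hXnn : 0 ≤ (1 - p/c) ^ (t-1) := le_trans (Real.exp_pos _).le hpow
  calc (p ^ 2 / 10) * Real.exp (-(4 * p))
      ≤ (p ^ 2 / 10) * ((1 - p/c) ^ (t-1)) := by
        apply mul_le_mul_of_nonneg_left hpow; positivity
    _ = (1/10) * p * c * (p/c) * (1 - p/c) ^ (t-1) := by
        field_simp
    _ ≤ (1 / 10) * p * (t : ℝ) * (p / c) * (1 - p / c) ^ (t - 1) := by
        apply mul_le_mul_of_nonneg_right _ hXnn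
        apply mul_le_mul_of_nonneg_right _ hx0
        apply mul_le_mul_of_nonneg_left htc
        positivity
end

section
/- Let α be a real number with 0 < α < 1/4, let i, j, n be natural numbers with j < i, 2^i ≤ n, 2^{j+1} ≤ n, and n ≥ 100, and set p = 2^{−α(i−j)}/2. Then n · p · (p/2^j) · (1 − p/2^j)^{n−2} ≤ 1.1 · p². -/
private lemma keyB' (x : ℝ) : x * Real.exp (-x) ≤ Real.exp (-1) := by
  have h2 : x ≤ Real.exp (x - 1) := by linarith [Real.add_one_le_exp (x - 1)]
  calc x * Real.exp (-x) ≤ Real.exp (x - 1) * Real.exp (-x) :=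
        mul_le_mul_of_nonneg_right h2 (Real.exp_pos _).le
    _ = Real.exp (-1) := by rw [← Real.exp_add]; ring_nf

private lemma keyA' (x y : ℝ) (hx : 1 ≤ x) (hxy : x ≤ y) :
    y * Real.exp (-y) ≤ x * Real.exp (-x) := by
  have h1 : y ≤ x * Real.exp (y - x) := by
    nlinarith [Real.add_one_le_exp (y - x),
      mul_le_mul_of_nonneg_left (Real.add_one_le_exp (y - x)) (by linarith : (0:ℝ) ≤ x),
      mul_nonneg (by linarith : (0:ℝ) ≤ x - 1) (by linarith : (0:ℝ) ≤ y - x)]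
  calc y * Real.exp (-y) ≤ (x * Real.exp (y - x)) * Real.exp (-y) :=
        mul_le_mul_of_nonneg_right h1 (Real.exp_pos _).le
    _ = x * Real.exp (-x) := by rw [mul_assoc, ← Real.exp_add]; ring_nf

private lemma helper1' (c N : ℝ) (hc : 0 < c) (h : Real.exp (-1) ≤ 1.1 * c) :
    N * Real.exp (-(c * N)) ≤ 1.1 := by
  have key : c * (N * Real.exp (-(c * N))) ≤ c * 1.1 := by
    calc c * (N * Real.exp (-(c * N))) = (c * N) * Real.exp (-(c * N)) := by ring
      _ ≤ Real.exp (-1) := keyB' _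
      _ ≤ 1.1 * c := h
      _ = c * 1.1 := by ring
  exact le_of_mul_le_mul_left key hc

private lemma helper2' (c N x₀ : ℝ) (hc : 0 < c) (hx₀ : 1 ≤ x₀)
    (hM : x₀ ≤ c * N) (h : x₀ * Real.exp (-x₀) ≤ 1.1 * c) :
    N * Real.exp (-(c * N)) ≤ 1.1 := by
  have key : c * (N * Real.exp (-(c * N))) ≤ c * 1.1 := by
    calc c * (N * Real.exp (-(c * N))) = (c * N) * Real.exp (-(c * N)) := by ring
      _ ≤ x₀ * Real.exp (-x₀) := keyA' x₀ (c * N) hx₀ hM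
      _ ≤ 1.1 * c := h
      _ = c * 1.1 := by ring
  exact le_of_mul_le_mul_left key hc

private lemma taylor3' (x : ℝ) (hx : 0 ≤ x) :
    1 + x + x ^ 2 / 2 + x ^ 3 / 6 ≤ Real.exp x := by
  have h := Real.sum_le_exp_of_nonneg hx 4
  simp [Finset.sum_range_succ, Nat.factorial] at h
  linarith

private lemma num1 : (0.7:ℝ) ≤ (2:ℝ) ^ (-(1/2) : ℝ) := by
  have hsq : ((2:ℝ) ^ (-(1/2) : ℝ)) ^ 2 = 2⁻¹ := by
    rw [← Real.rpow_natCast ((2:ℝ) ^ (-(1/2) : ℝ)) 2, ← Real.rpow_mul (by norm_num)]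
    norm_num
  have hpos : (0:ℝ) < (2:ℝ) ^ (-(1/2) : ℝ) := Real.rpow_pos_of_pos two_pos _
  nlinarith

private lemma num2 : Real.exp (-1) ≤ 0.368 := by
  rw [Real.exp_neg]
  have h1 := Real.exp_one_gt_d9
  rw [inv_le_comm₀ (Real.exp_pos 1) (by norm_num)]
  norm_num
  linarith

private lemma s168 (s : ℝ) (h0 : 0 < s) (h8 : (8:ℝ) ≤ s ^ 4) : (1.68:ℝ) ≤ s := by
  by_contra h
  push_neg at h
  have h1 : s ^ 2 < 2.8224 := by nlinarith
  nlinarith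

private lemma s474 (s : ℝ) (hs : (1.68:ℝ) ≤ s) : (4.74:ℝ) ≤ s ^ 3 := by
  nlinarith [mul_nonneg (by linarith : (0:ℝ) ≤ s - 1.68) (sq_nonneg s),
    mul_nonneg (by linarith : (0:ℝ) ≤ s - 1.68) (sq_nonneg (s - 1.68)), sq_nonneg (s - 1.68)]

private lemma s46 (s : ℝ) (hs : (1.68:ℝ) ≤ s) : s ^ 4 ≤ (s ^ 3) ^ 2 / 2.8224 := by
  have hs0 : (0:ℝ) < s := by linarith
  have h2 : (0:ℝ) ≤ s ^ 2 - 2.8224 := by nlinarith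
  ring_nf
  nlinarith [mul_nonneg (pow_nonneg hs0.le 4) h2]

private lemma cubbound (u : ℝ) (hu : (4.74:ℝ) ≤ u) :
    u ^ 2 / 2.8224 ≤ 1.1 * (1 + 0.49 * u + (0.49 * u) ^ 2 / 2 + (0.49 * u) ^ 3 / 6) := by
  have h1 : 0 ≤ u ^ 3 - 15.42 * u ^ 2 + 79.1388 * u - 135.163944 := by
    nlinarith [mul_nonneg (by linarith : (0:ℝ) ≤ u - 4.74) (sq_nonneg (u - 5.34))]
  have h2 : 0 ≤ u ^ 2 - 10.68 * u + 28.5156 := by nlinarith [sq_nonneg (u - 5.34)]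
  ring_nf
  linarith [h1, h2, hu]

private lemma expbound (s : ℝ) (hs : (1.68:ℝ) ≤ s) :
    s ^ 4 ≤ 1.1 * Real.exp (0.49 * s ^ 3) := by
  have hx : (0:ℝ) ≤ 0.49 * s ^ 3 := by nlinarith [s474 s hs]
  have ht := taylor3' (0.49 * s ^ 3) hx
  have hc := cubbound (s ^ 3) (s474 s hs)
  have h4 := s46 s hs
  linarith

set_option maxHeartbeats 1000000 in
theorem stmt_7 (α : ℝ) (hα0 : 0 < α) (hα1 : α < 1 / 4) (i j n : ℕ)
    (hji : j < i) (hin : 2 ^ i ≤ n) (hjn : 2 ^ (j + 1) ≤ n) (hn : 100 ≤ n)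
    (p : ℝ) (hp : p = (2 : ℝ) ^ (-(α * ((i : ℝ) - (j : ℝ)))) / 2) :
    (n : ℝ) * p * (p / 2 ^ j) * (1 - p / 2 ^ j) ^ (n - 2) ≤ 1.1 * p ^ 2 := by
  have h2j : (0:ℝ) < 2 ^ j := by positivity
  have h2j1 : (1:ℝ) ≤ 2 ^ j := one_le_pow₀ one_le_two
  set K : ℝ := (i:ℝ) - (j:ℝ) with hK
  have hK1 : (1:ℝ) ≤ K := by
    have h : (j:ℝ) + 1 ≤ (i:ℝ) := by exact_mod_cast hji
    simp only [hK]; linarith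
  have hαK : α * K ≤ K / 4 := by nlinarith
  have hαK0 : 0 ≤ α * K := by nlinarith
  have hp0 : 0 < p := by rw [hp]; positivity
  have hple : p ≤ 1 / 2 := by
    rw [hp]
    have h1 : (2:ℝ) ^ (-(α * K)) ≤ 1 :=
      Real.rpow_le_one_of_one_le_of_nonpos one_le_two (by linarith)
    linarith
  set q : ℝ := p / 2 ^ j with hq
  have hq0 : 0 < q := div_pos hp0 h2j
  have hqp : q ≤ p := div_le_self hp0.le h2j1
  have hq1 : q ≤ 1 / 2 := le_trans hqp hple
  set N : ℝ := (n:ℝ) / 2 ^ j with hN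
  have hN0 : 0 < N := by
    have hnn : (0:ℝ) < n := by
      have : (100:ℝ) ≤ (n:ℝ) := by exact_mod_cast hn
      linarith
    exact div_pos hnn h2j
  have hn2 : ((n - 2 : ℕ):ℝ) = (n:ℝ) - 2 := by
    have h2n : 2 ≤ n := by omega
    push_cast [Nat.cast_sub h2n]
    ring
  have hn100 : (100:ℝ) ≤ (n:ℝ) := by exact_mod_cast hn
  -- step 1: the power term is at most an exponential
  have hA : (1 - q) ^ (n - 2) ≤ Real.exp (-(0.98 * p * N)) := by
    have e1 : (1 - q) ^ (n - 2) ≤ Real.exp (-q) ^ (n - 2) := by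
      apply pow_le_pow_left₀ (by linarith)
      linarith [Real.add_one_le_exp (-q)]
    have e2 : Real.exp (-q) ^ (n - 2) = Real.exp (((n - 2 : ℕ):ℝ) * (-q)) := by
      rw [Real.exp_nat_mul]
    have e3 : ((n - 2 : ℕ):ℝ) * (-q) ≤ -(0.98 * p * N) := by
      rw [hn2]
      have hNp : p * N = (n:ℝ) * q := by
        simp only [hN, hq]; ring
      nlinarith [hq0.le]
    calc (1 - q) ^ (n - 2) ≤ Real.exp (-q) ^ (n - 2) := e1
      _ = Real.exp (((n - 2 : ℕ):ℝ) * (-q)) := e2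
      _ ≤ Real.exp (-(0.98 * p * N)) := Real.exp_le_exp.2 e3
  -- main claim
  have hmain : N * Real.exp (-(0.98 * p * N)) ≤ 1.1 := by
    have hc0 : (0:ℝ) < 0.98 * p := by linarith
    have hKij : ((i - j : ℕ):ℝ) = K := by
      simp only [hK]; push_cast [Nat.cast_sub hji.le]; ring
    rcases le_or_gt (i - j) 2 with hk | hk
    · -- small gap : universal bound
      have hK2 : K ≤ 2 := by
        have h2 : ((i - j : ℕ):ℝ) ≤ 2 := by exact_mod_cast hk
        linarith [hKij]
      have hs2 : (2:ℝ) ^ (-(1/2) : ℝ) ≤ (2:ℝ) ^ (-(α * K)) :=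
        Real.rpow_le_rpow_of_exponent_le one_le_two (by nlinarith)
      have hp35 : (0.35:ℝ) ≤ p := by rw [hp]; linarith [num1]
      apply helper1' _ _ hc0
      linarith [num2]
    · -- large gap
      have hK3 : (3:ℝ) ≤ K := by
        have h2 : (3:ℝ) ≤ ((i - j : ℕ):ℝ) := by exact_mod_cast hk
        linarith [hKij]
      set s : ℝ := (2:ℝ) ^ (K / 4) with hs
      have hs0 : (0:ℝ) < s := Real.rpow_pos_of_pos two_pos _
      have hs4 : s ^ 4 = (2:ℝ) ^ K := by
        rw [hs, ← Real.rpow_natCast ((2:ℝ) ^ (K/4)) 4, ← Real.rpow_mul (by norm_num)]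
        norm_num
      have h2K8 : (8:ℝ) ≤ (2:ℝ) ^ K := by
        have h1 : (2:ℝ) ^ (3:ℝ) ≤ (2:ℝ) ^ K :=
          Real.rpow_le_rpow_of_exponent_le one_le_two hK3
        have h2 : (2:ℝ) ^ (3:ℝ) = 8 := by
          rw [show (3:ℝ) = ((3:ℕ):ℝ) by norm_num, Real.rpow_natCast]; norm_num
        linarith
    -- basic facts about s
      have hs168 : (1.68:ℝ) ≤ s := s168 s hs0 (by linarith [hs4])
      have hs3 : (4.74:ℝ) ≤ s ^ 3 := s474 s hs168
      -- p ≥ 1/(2s)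
      have hps : s⁻¹ / 2 ≤ p := by
        rw [hp]
        have h1 : (2:ℝ) ^ (-(K/4)) ≤ (2:ℝ) ^ (-(α * K)) :=
          Real.rpow_le_rpow_of_exponent_le one_le_two (by linarith)
        have h2 : (2:ℝ) ^ (-(K/4)) = s⁻¹ := by
          rw [hs, ← Real.rpow_neg (by norm_num)]
        linarith [h2 ▸ h1]
      have hps' : (1:ℝ) ≤ p * (2 * s) := by
        have h4 := mul_le_mul_of_nonneg_right hps (by positivity : (0:ℝ) ≤ 2 * s)
        have heq : s⁻¹ / 2 * (2 * s) = 1 := by field_simp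
        linarith
      -- N ≥ s^4
      have hNge : s ^ 4 ≤ N := by
        rw [hs4]
        have h1 : (2:ℝ) ^ K = (2:ℝ) ^ (i:ℕ) / (2:ℝ) ^ (j:ℕ) := by
          rw [hK, Real.rpow_sub two_pos, Real.rpow_natCast, Real.rpow_natCast]
        rw [h1, hN]
        have h2 : ((2:ℝ) ^ i : ℝ) ≤ (n:ℝ) := by exact_mod_cast hin
        exact (div_le_div_iff_of_pos_right h2j).2 h2
      have hA0 : (0:ℝ) ≤ 0.49 * s ^ 3 := by linarith
      apply helper2' (0.98 * p) N (0.49 * s ^ 3) hc0 (by nlinarith) ?_ ?_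
      · -- x₀ ≤ c * N
        have h1 : 0.49 * s ^ 3 ≤ 0.98 * p * s ^ 4 := by
          nlinarith [mul_nonneg (by linarith : (0:ℝ) ≤ p * (2 * s) - 1) hA0]
        have h3 : 0.98 * p * s ^ 4 ≤ 0.98 * p * N := mul_le_mul_of_nonneg_left hNge (by linarith)
        linarith
      · -- x₀ * exp(-x₀) ≤ 1.1 * c
        have hE0 : (0:ℝ) < Real.exp (0.49 * s ^ 3) := Real.exp_pos _
        have e2 : s ^ 4 * Real.exp (-(0.49 * s ^ 3)) ≤ 1.1 := by
          rw [Real.exp_neg, ← div_eq_mul_inv, div_le_iff₀ hE0]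
          exact expbound s hs168
        have e3 : (0.539 : ℝ) ≤ 1.1 * (0.98 * p) * s := by nlinarith [hps']
        have key : (0.49 * s ^ 3 * Real.exp (-(0.49 * s ^ 3))) * s ≤ (1.1 * (0.98 * p)) * s := by
          calc (0.49 * s ^ 3 * Real.exp (-(0.49 * s ^ 3))) * s
              = 0.49 * (s ^ 4 * Real.exp (-(0.49 * s ^ 3))) := by ring
            _ ≤ 0.49 * 1.1 := mul_le_mul_of_nonneg_left e2 (by norm_num)
            _ = 0.539 := by norm_num
            _ ≤ 1.1 * (0.98 * p) * s := e3
        exact le_of_mul_le_mul_right key hs0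
  -- conclude
  have hLHS : (n:ℝ) * p * q * ((1 - q) ^ (n - 2)) ≤ (n:ℝ) * p * q * Real.exp (-(0.98 * p * N)) := by
    apply mul_le_mul_of_nonneg_left hA
    positivity
  have hfin : (n:ℝ) * p * q * Real.exp (-(0.98 * p * N)) ≤ 1.1 * p ^ 2 := by
    have hid : (n:ℝ) * p * q = p ^ 2 * N := by
      simp only [hq, hN]; ring
    rw [hid]
    calc p ^ 2 * N * Real.exp (-(0.98 * p * N)) = p ^ 2 * (N * Real.exp (-(0.98 * p * N))) := by ring
      _ ≤ p ^ 2 * 1.1 := mul_le_mul_of_nonneg_left hmain (by positivity)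
      _ = 1.1 * p ^ 2 := by ring
  calc (n:ℝ) * p * q * ((1 - q) ^ (n - 2)) ≤ (n:ℝ) * p * q * Real.exp (-(0.98 * p * N)) := hLHS
    _ ≤ 1.1 * p ^ 2 := hfin
end

section
/- Let n ≥ 8 be an integer and set c = n/2 (as a real number). Let p and p' be real numbers with 0 < p ≤ 1 and 0 < p' ≤ p/4. If ((n−1)/c) · (1 − p/c)^{n−2} ≥ 1.45, then ((n−1)/c) · (1 − p'/c)^{n−2} > 1.59. -/
/-!
Write `A = (n - 1)/c ≥ 7/4`, `X = (1 - p/c)^(n-2)` and `Y = (1 - p'/c)^(n-2)`.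
Bernoulli's inequality gives `1 - p/c ≤ 1 - 4p'/c ≤ (1 - p'/c)^4`, hence `X ≤ Y^4` and
`(A Y)^4 ≥ A^3 (A X) ≥ 1.75^3 · 1.45 > 1.59^4`.
-/

lemma one_sub_le_one_sub_pow_of_mul_le {s t : ℝ} (k : ℕ) (ht : t ≤ 2) (hts : k * t ≤ s) :
    1 - s ≤ (1 - t) ^ k := by
  have bernoulli := one_add_mul_le_pow (a := -t) (by linarith) k
  rw [← sub_eq_add_neg] at bernoulli
  linarith

lemma pow_mul_le_mul_pow_pow_succ {A x y : ℝ} {k : ℕ} (m : ℕ) (hA : 0 ≤ A) (hx : 0 ≤ x)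
    (hxy : x ≤ y ^ (k + 1)) : A ^ k * (A * x ^ m) ≤ (A * y ^ m) ^ (k + 1) :=
  calc A ^ k * (A * x ^ m) = A ^ (k + 1) * x ^ m := by ring
    _ ≤ A ^ (k + 1) * (y ^ (k + 1)) ^ m := by gcongr
    _ = (A * y ^ m) ^ (k + 1) := by rw [← pow_mul, mul_comm (k + 1), pow_mul, mul_pow]

theorem stmt_9_general (n : ℕ) (hn : 8 ≤ n) (c : ℝ) (hc : c = (n : ℝ) / 2)
    (p p' : ℝ) (hp1 : p ≤ 1) (hp' : p' ≤ p / 4)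
    (h : 1.45 ≤ ((n : ℝ) - 1) / c * (1 - p / c) ^ (n - 2)) :
    1.59 < ((n : ℝ) - 1) / c * (1 - p' / c) ^ (n - 2) := by
  have hn8 : (8 : ℝ) ≤ n := by exact_mod_cast hn
  have hc4 : 4 ≤ c := by linarith
  have hA : 7 / 4 ≤ ((n : ℝ) - 1) / c := by rw [le_div_iff₀ (by linarith)]; linarith
  have hpc : p / c ≤ 1 / 4 := by rw [div_le_iff₀ (by linarith)]; nlinarith
  have hp'c : 4 * (p' / c) ≤ p / c := by
    rw [← mul_div_assoc]; exact div_le_div_of_nonneg_right (by linarith) (by linarith)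
  have hbase : 1 - p / c ≤ (1 - p' / c) ^ 4 :=
    one_sub_le_one_sub_pow_of_mul_le 4 (by linarith) (by exact_mod_cast hp'c)
  have hfourth : ((n : ℝ) - 1) / c * (1 - p / c) ^ (n - 2) * (7 / 4) ^ 3 ≤
      (((n : ℝ) - 1) / c * (1 - p' / c) ^ (n - 2)) ^ 4 := by
    refine le_trans ?_ (pow_mul_le_mul_pow_pow_succ (n - 2) (by linarith) (by linarith) hbase)
    rw [mul_comm]
    gcongr
  have hY : 0 ≤ 1 - p' / c := by linarith
  refine lt_of_pow_lt_pow_left₀ 4 (by positivity) ?_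
  linarith

theorem stmt_9 (n : ℕ) (hn : 8 ≤ n) (c : ℝ) (hc : c = (n : ℝ) / 2)
    (p p' : ℝ) (hp0 : 0 < p) (hp1 : p ≤ 1) (hp'0 : 0 < p') (hp' : p' ≤ p / 4)
    (h : 1.45 ≤ ((n : ℝ) - 1) / c * (1 - p / c) ^ (n - 2)) :
    1.59 < ((n : ℝ) - 1) / c * (1 - p' / c) ^ (n - 2) :=
  stmt_9_general n hn c hc p p' hp1 hp' h
end

section
/- Let n ≥ 4 be an integer and set c = n/2 (as a real number). Let p and p' be real numbers with 0 < p ≤ 1 and 0 < p' ≤ p/2048. If (1 − p/c)^{n−1} ≥ 0.89, then (1 − p'/c)^{n−1} ≥ 0.89^{1/1024}. -/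
/-!
Write `L = -log 0.89`, `x = p / c`, `t = p' / c` and `m = n - 1`. Since `1 - x ≤ exp (-x)`, the
hypothesis forces `m x ≤ L`, hence `m t ≤ L / 2048`. Bernoulli's inequality then gives
`(1 - t)^m ≥ 1 - m t ≥ 1 - L / 2048`, and `exp (-u) ≤ 1 - u / 2` on `[0, 1]`, taken at `u = L / 1024`,
bounds this below by `exp (-L / 1024) = 0.89 ^ (1 / 1024)`. The factor `2048 = 2 · 1024` pays for the
halving in the last estimate.
-/

open Real

lemma Real.exp_neg_le_one_sub_half {u : ℝ} (hu0 : 0 ≤ u) (hu1 : u ≤ 1) :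
    exp (-u) ≤ 1 - u / 2 := by
  have hu : 1 + u ≤ exp u := by linarith [add_one_le_exp u]
  calc exp (-u) = (exp u)⁻¹ := exp_neg u
    _ ≤ (1 + u)⁻¹ := inv_anti₀ (by positivity) hu
    _ ≤ 1 - u / 2 := by
      rw [inv_le_iff_one_le_mul₀ (by positivity)]
      nlinarith

lemma Real.nat_mul_le_neg_log_of_le_one_sub_pow {a x : ℝ} {m : ℕ} (ha : 0 < a) (hx : x ≤ 1)
    (h : a ≤ (1 - x) ^ m) : m * x ≤ -log a := by
  have hexp : (1 - x) ^ m ≤ exp (-(m * x)) := by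
    calc (1 - x) ^ m ≤ exp (-x) ^ m := pow_le_pow_left₀ (by linarith) (one_sub_le_exp_neg x) m
      _ = exp (-(m * x)) := by rw [← exp_nat_mul]; ring_nf
  have := (log_le_iff_le_exp ha).2 (h.trans hexp)
  linarith

theorem Real.rpow_one_div_le_one_sub_pow {a k x t : ℝ} {m : ℕ} (ha0 : 0 < a) (ha1 : a ≤ 1)
    (hk : 1 ≤ k) (hak : -log a ≤ k) (hx : x ≤ 1) (ht : t ≤ x / (2 * k))
    (h : a ≤ (1 - x) ^ m) : a ^ (1 / k) ≤ (1 - t) ^ m := by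
  have hk0 : 0 < k := by linarith
  have hL0 : 0 ≤ -log a := neg_nonneg.2 (log_nonpos ha0.le ha1)
  have hmx : m * x ≤ -log a := nat_mul_le_neg_log_of_le_one_sub_pow ha0 hx h
  have hmt : m * t ≤ -log a / (2 * k) := by
    calc m * t ≤ m * (x / (2 * k)) := mul_le_mul_of_nonneg_left ht m.cast_nonneg
      _ = m * x / (2 * k) := by ring
      _ ≤ -log a / (2 * k) := by gcongr
  have ht2 : t ≤ 2 := by
    have : x / (2 * k) ≤ 1 := by rw [div_le_one (by positivity)]; linarith
    linarith
  have hbernoulli : 1 - m * t ≤ (1 - t) ^ m := by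
    simpa [sub_eq_add_neg] using one_add_mul_le_pow (a := -t) (by linarith) m
  calc a ^ (1 / k) = exp (-(-log a / k)) := by rw [rpow_def_of_pos ha0]; ring_nf
    _ ≤ 1 - -log a / k / 2 :=
      exp_neg_le_one_sub_half (div_nonneg hL0 hk0.le) ((div_le_one hk0).2 hak)
    _ = 1 - -log a / (2 * k) := by ring
    _ ≤ 1 - m * t := by linarith
    _ ≤ (1 - t) ^ m := hbernoulli

theorem stmt_11_general (n : ℕ) (hn : 4 ≤ n) (c : ℝ) (hc : c = (n : ℝ) / 2)
    (p p' : ℝ) (hp1 : p ≤ 1) (hp' : p' ≤ p / 2048)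
    (h : 0.89 ≤ (1 - p / c) ^ (n - 1)) :
    (0.89 : ℝ) ^ ((1 : ℝ) / 1024) ≤ (1 - p' / c) ^ (n - 1) := by
  have hc2 : 2 ≤ c := by
    have : (4 : ℝ) ≤ n := by exact_mod_cast hn
    rw [hc]; linarith
  have hlog : -log 0.89 ≤ (1024 : ℝ) := by
    have := one_sub_inv_le_log_of_pos (x := (0.89 : ℝ)) (by norm_num)
    norm_num at this ⊢; linarith
  refine rpow_one_div_le_one_sub_pow (by norm_num) (by norm_num) (by norm_num) hlog ?_ ?_ h
  · rw [div_le_one (by linarith)]; linarith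
  · calc p' / c ≤ p / 2048 / c := by gcongr
      _ = p / c / (2 * 1024) := by ring

theorem stmt_11 (n : ℕ) (hn : 4 ≤ n) (c : ℝ) (hc : c = (n : ℝ) / 2)
    (p p' : ℝ) (hp0 : 0 < p) (hp1 : p ≤ 1) (hp'0 : 0 < p') (hp' : p' ≤ p / 2048)
    (h : 0.89 ≤ (1 - p / c) ^ (n - 1)) :
    (0.89 : ℝ) ^ ((1 : ℝ) / 1024) ≤ (1 - p' / c) ^ (n - 1) :=
  stmt_11_general n hn c hc p p' hp1 hp' h
end
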